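/- Let (a, b) be a pair of Δ_C-valued random vectors with E[a | b] = (M^0)'b almost surely, where M^0 is a row-stochastic C×C matrix with all entries strictly positive, and suppose that for every i ∈ {1,…,C} and every ε > 0, P(b_i ≥ 1 − ε) > 0 (Assumption 1). Fix ξ > 0. Then for every C×(C−1) matrix M̃ whose completion M (with M_{iC} = 1 − Σ_{j<C} M_{ij}) has all entries strictly positive, the C(C−1) × C(C−1) matrix H(M̃), whose rows and columns are indexed by pairs (i,j) with i ∈ {1,…,C} and j ∈ {1,…,C−1} and whose entries are H_{(i,j),(i',j')} = ξ·E[ b_i b_{i'} ( 1{j=j'}·a_j/((M'b)_j)^2 + a_C/((M'b)_C)^2 ) ], is symmetric positive definite. (H(M̃) is the Hessian of M̃ ↦ ξ·E[D_KL(a ‖ M'b)].) -/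

import Mathlib

/-!
In a direction `v`, the quadratic form of `H(M̃)` is `ξ · E[Σ_k ((D'b)_k / (M'b)_k)² a_k]`, where
`D` is the derivative of the completion `M̃ ↦ M` along `v`. Conditioning on `b` replaces `a_k` by
`(M⁰'b)_k`, which is bounded below because `M⁰ > 0`, so the form is positive as soon as `D'b ≠ 0`
with positive probability. Assumption 1 gives this: if `D i k ≠ 0`, then with positive probability
`b` is so close to the vertex `e_i` that `(D'b)_k` stays close to `D i k`.
-/

open MeasureTheory ProbabilityTheory Filter Finset
open scoped ENNReal NNReal BigOperators

noncomputable section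

namespace GBQL

/-- The probability simplex Δ_C in ℝ^C. -/
def simplex (C : ℕ) : Set (Fin C → ℝ) :=
  {x | (∀ i, 0 ≤ x i) ∧ ∑ i, x i = 1}

/-- A C×C matrix (as a function) is row-stochastic. -/
def rowStochastic {C : ℕ} (M : Fin C → Fin C → ℝ) : Prop :=
  (∀ i j, 0 ≤ M i j) ∧ ∀ i, ∑ j, M i j = 1

/-- M' x, the transpose of M applied to x : (M'x)_j = Σ_i M_{ij} x_i. -/
def mtv {C : ℕ} (M : Fin C → Fin C → ℝ) (x : Fin C → ℝ) : Fin C → ℝ :=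
  fun j => ∑ i, M i j * x i

open scoped Classical in
/-- Kullback–Leibler divergence D_KL(p‖q) = Σ_j p_j log(p_j/q_j) as an element of [0,∞],
with conventions 0·log(0/x) = 0 and p_j log(p_j/0) = ∞ for p_j > 0. -/
def klDiv {C : ℕ} (p q : Fin C → ℝ) : ℝ≥0∞ :=
  if ∃ j, 0 < p j ∧ q j = 0 then ⊤
  else ENNReal.ofReal (∑ j, if p j = 0 then 0 else p j * Real.log (p j / q j))

/-- Real-valued Kullback–Leibler divergence (agreeing with `klDiv` whenever `q` has
strictly positive entries). -/
def klReal {C : ℕ} (p q : Fin C → ℝ) : ℝ :=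
  ∑ j, if p j = 0 then 0 else p j * Real.log (p j / q j)

/-- Completion of a C×(C−1) matrix M̃ to a C×C matrix M with M_{iC} = 1 − Σ_{j<C} M_{ij}. -/
def completeM {c : ℕ} (Mt : Fin (c+1) → Fin c → ℝ) : Fin (c+1) → Fin (c+1) → ℝ :=
  fun i j => if h : (j : ℕ) < c then Mt i ⟨j, h⟩ else 1 - ∑ k, Mt i k

/-- Completion of p̃ ∈ ℝ^{C−1} to p ∈ ℝ^C with p_C = 1 − Σ_{i<C} p_i. -/
def completeV {c : ℕ} (pt : Fin c → ℝ) : Fin (c+1) → ℝ :=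
  fun i => if h : (i : ℕ) < c then pt ⟨i, h⟩ else 1 - ∑ k, pt k

/-- The first C−1 columns of a C×C matrix. -/
def truncM {c : ℕ} (M : Fin (c+1) → Fin (c+1) → ℝ) : Fin (c+1) → Fin c → ℝ :=
  fun i j => M i (Fin.castSucc j)

/-- The first C−1 coordinates of a vector in ℝ^C. -/
def truncV {c : ℕ} (p : Fin (c+1) → ℝ) : Fin c → ℝ := fun i => p (Fin.castSucc i)

/-- The parameter space: θ = (M̃, p̃). -/
abbrev Param (c : ℕ) := (Fin (c+1) → Fin c → ℝ) × (Fin c → ℝ)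

/-- S_d = {x ∈ ℝ^d : x_i ≥ 0, Σ_i x_i ≤ 1}. -/
def Sset (d : ℕ) : Set (Fin d → ℝ) := {x | (∀ i, 0 ≤ x i) ∧ ∑ i, x i ≤ 1}

/-- Θ = (S_{C−1})^C × S_{C−1}. -/
def Theta (c : ℕ) : Set (Param c) := {θ | (∀ i, θ.1 i ∈ Sset c) ∧ θ.2 ∈ Sset c}

/-- ℓ1 distance on the concatenated coordinates of θ. -/
def l1dist {c : ℕ} (θ θ' : Param c) : ℝ :=
  (∑ i, ∑ j, |θ.1 i j - θ'.1 i j|) + ∑ i, |θ.2 i - θ'.2 i|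

/-- The empirical loss f_N(θ), valued in [0,∞]. -/
def fN {c : ℕ} (N n : ℕ) (aU aL bL : ℕ → Fin (c+1) → ℝ) (θ : Param c) : ℝ≥0∞ :=
  ((∑ r ∈ Finset.range N, klDiv (aU r) (mtv (completeM θ.1) (completeV θ.2))) +
    ∑ r ∈ Finset.range n, klDiv (aL r) (mtv (completeM θ.1) (bL r))) / (N : ℝ≥0∞)

/-- The empirical loss f_N(θ), real-valued version (valid near interior points). -/
def fNreal {c : ℕ} (N n : ℕ) (aU aL bL : ℕ → Fin (c+1) → ℝ) (θ : Param c) : ℝ :=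
  ((∑ r ∈ Finset.range N, klReal (aU r) (mtv (completeM θ.1) (completeV θ.2))) +
    ∑ r ∈ Finset.range n, klReal (aL r) (mtv (completeM θ.1) (bL r))) / (N : ℝ)

/-- exp(−x) for x ∈ [0,∞], with exp(−∞) = 0. -/
def expNeg (x : ℝ≥0∞) : ℝ≥0∞ :=
  if x = ⊤ then 0 else ENNReal.ofReal (Real.exp (-x.toReal))

/-- The extended logarithm [0,∞] → [−∞,∞]. -/
def elog (x : ℝ≥0∞) : EReal :=
  if x = 0 then ⊥ else if x = ⊤ then ⊤ else ((Real.log x.toReal : ℝ) : EReal)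

/-- Index set for the coordinates of θ = (M̃, p̃): pairs (i,j) for M̃ entries and i for p̃. -/
abbrev Idx (c : ℕ) := (Fin (c+1) × Fin c) ⊕ Fin c

/-- Coordinates of θ as a vector indexed by `Idx c`. -/
def vecParam {c : ℕ} (θ : Param c) : Idx c → ℝ :=
  Sum.elim (fun ij => θ.1 ij.1 ij.2) (fun i => θ.2 i)

/-- Standard basis vectors of the parameter space, indexed by `Idx c`. -/
def basisP (c : ℕ) : Idx c → Param c :=
  Sum.elim (fun ij => (fun i j => if i = ij.1 ∧ j = ij.2 then 1 else 0, 0))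
    (fun i0 => (0, fun i => if i = i0 then 1 else 0))

open scoped Matrix

section Simplex

variable {C : ℕ} {x : Fin C → ℝ}

lemma le_one_of_mem_simplex (hx : x ∈ simplex C) (i : Fin C) : x i ≤ 1 :=
  hx.2 ▸ single_le_sum (fun k _ => hx.1 k) (mem_univ i)

lemma add_le_one_of_mem_simplex (hx : x ∈ simplex C) {i k : Fin C} (hik : i ≠ k) :
    x i + x k ≤ 1 := by
  rw [← sum_pair hik, ← hx.2]
  exact sum_le_sum_of_subset_of_nonneg (subset_univ _) fun j _ _ => hx.1 j

lemma abs_dotProduct_sub_le (hx : x ∈ simplex C) (u : Fin C → ℝ) (i : Fin C) :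
    |u ⬝ᵥ x - u i| ≤ (∑ k, |u k - u i|) * (1 - x i) := by
  have hsub : u ⬝ᵥ x - u i = ∑ k, (u k - u i) * x k := by
    simp only [sub_mul, sum_sub_distrib, ← mul_sum, hx.2, mul_one, dotProduct]
  rw [hsub, sum_mul]
  refine (abs_sum_le_sum_abs _ _).trans (sum_le_sum fun k _ => ?_)
  rw [abs_mul, abs_of_nonneg (hx.1 k)]
  rcases eq_or_ne k i with rfl | hki
  · simp
  · have := add_le_one_of_mem_simplex hx hki
    exact mul_le_mul_of_nonneg_left (by linarith) (abs_nonneg _)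

lemma abs_mtv_le (hx : x ∈ simplex C) (D : Fin C → Fin C → ℝ) (k : Fin C) :
    |mtv D x k| ≤ ∑ i, |D i k| :=
  (abs_sum_le_sum_abs _ _).trans <| sum_le_sum fun i _ => by
    rw [abs_mul, abs_of_nonneg (hx.1 i)]
    exact mul_le_of_le_one_right (abs_nonneg _) (le_one_of_mem_simplex hx i)

lemma exists_pos_le_mtv {M : Fin C → Fin C → ℝ} (hM : ∀ i j, 0 < M i j) :
    ∃ m > 0, ∀ x ∈ simplex C, ∀ k, m ≤ mtv M x k := by
  cases isEmpty_or_nonempty (Fin C)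
  · exact ⟨1, one_pos, fun x _ k => isEmptyElim k⟩
  obtain ⟨ij, hij⟩ := Finite.exists_min fun ij : Fin C × Fin C => M ij.1 ij.2
  refine ⟨_, hM ij.1 ij.2, fun x hx k => ?_⟩
  calc M ij.1 ij.2 = ∑ i, M ij.1 ij.2 * x i := by rw [← mul_sum, hx.2, mul_one]
    _ ≤ mtv M x k := sum_le_sum fun i _ => mul_le_mul_of_nonneg_right (hij (i, k)) (hx.1 i)

@[fun_prop]
lemma measurable_mtv (M : Fin C → Fin C → ℝ) (k : Fin C) :
    Measurable fun x => mtv M x k := by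
  unfold mtv
  fun_prop

end Simplex

lemma measure_dotProduct_ne_zero_pos {Ω : Type*} [MeasurableSpace Ω] {μ : Measure Ω} {C : ℕ}
    {b : Ω → Fin C → ℝ} (hb_simplex : ∀ ω, b ω ∈ simplex C)
    (hpos : ∀ i : Fin C, ∀ ε > (0 : ℝ), 0 < μ {ω | 1 - ε ≤ b ω i})
    {u : Fin C → ℝ} (hu : u ≠ 0) : 0 < μ {ω | u ⬝ᵥ b ω ≠ 0} := by
  obtain ⟨i, hi⟩ := Function.ne_iff.mp hu
  set K := ∑ k, |u k - u i|
  have hK : 0 ≤ K := sum_nonneg fun k _ => abs_nonneg _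
  have hui : 0 < |u i| := abs_pos.mpr hi
  refine (hpos i (|u i| / (K + 1)) (by positivity)).trans_le (measure_mono fun ω hω => ?_)
  have hω : 1 - |u i| / (K + 1) ≤ b ω i := hω
  have hclose : |u ⬝ᵥ b ω - u i| < |u i| :=
    calc |u ⬝ᵥ b ω - u i| ≤ K * (1 - b ω i) := abs_dotProduct_sub_le (hb_simplex ω) u i
      _ ≤ K * (|u i| / (K + 1)) := mul_le_mul_of_nonneg_left (by linarith) hK
      _ < |u i| := by rw [mul_div_assoc', div_lt_iff₀ (by positivity)]; nlinarith
  intro h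
  rw [h, zero_sub, abs_neg] at hclose
  exact lt_irrefl _ hclose

section CondExp

variable {Ω E : Type*} [MeasurableSpace Ω] [MeasurableSpace E] {μ : Measure Ω}
  [IsFiniteMeasure μ] {b : Ω → E} {f φ : Ω → ℝ} {G : E → ℝ} {K : ℝ}

lemma condExp_comp_mul_ae_eq (hb : Measurable b) (hf : Integrable f μ)
    (hφ : μ[f | MeasurableSpace.comap b inferInstance] =ᵐ[μ] φ) (hG : Measurable G)
    (hK : ∀ ω, ‖G (b ω)‖ ≤ K) :
    μ[fun ω => G (b ω) * f ω | MeasurableSpace.comap b inferInstance]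
      =ᵐ[μ] fun ω => G (b ω) * φ ω := by
  have hGb : StronglyMeasurable[MeasurableSpace.comap b inferInstance] (G ∘ b) :=
    (hG.comp (Measurable.of_comap_le le_rfl)).stronglyMeasurable
  filter_upwards [condExp_stronglyMeasurable_mul_of_bound hb.comap_le hGb hf K (.of_forall hK),
    hφ] with ω h1 h2
  rw [← h2]
  exact h1

lemma integrable_comp_mul_of_condExp_ae_eq (hb : Measurable b) (hf : Integrable f μ)
    (hφ : μ[f | MeasurableSpace.comap b inferInstance] =ᵐ[μ] φ) (hG : Measurable G)
    (hK : ∀ ω, ‖G (b ω)‖ ≤ K) : Integrable (fun ω => G (b ω) * φ ω) μ :=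
  integrable_condExp.congr (condExp_comp_mul_ae_eq hb hf hφ hG hK)

lemma integral_comp_mul_eq_of_condExp_ae_eq (hb : Measurable b) (hf : Integrable f μ)
    (hφ : μ[f | MeasurableSpace.comap b inferInstance] =ᵐ[μ] φ) (hG : Measurable G)
    (hK : ∀ ω, ‖G (b ω)‖ ≤ K) : ∫ ω, G (b ω) * f ω ∂μ = ∫ ω, G (b ω) * φ ω ∂μ := by
  rw [← integral_condExp hb.comap_le, integral_congr_ae (condExp_comp_mul_ae_eq hb hf hφ hG hK)]

end CondExp

lemma dotProduct_mulVec_integral {Ω ι : Type*} [MeasurableSpace Ω] {μ : Measure Ω} [Fintype ι]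
    {h : ι → ι → Ω → ℝ} (hh : ∀ i j, Integrable (h i j) μ) (v : ι → ℝ) :
    v ⬝ᵥ (Matrix.of (fun i j => ∫ ω, h i j ω ∂μ) *ᵥ v)
      = ∫ ω, v ⬝ᵥ (Matrix.of (fun i j => h i j ω) *ᵥ v) ∂μ := by
  simp only [dotProduct, Matrix.mulVec, Matrix.of_apply, mul_sum]
  rw [integral_finsetSum _ fun i _ => integrable_finsetSum _ fun j _ =>
    ((hh i j).mul_const _).const_mul _]
  refine sum_congr rfl fun i _ => ?_
  rw [integral_finsetSum _ fun j _ => ((hh i j).mul_const _).const_mul _]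
  simp only [integral_const_mul, integral_mul_const]

section Hessian

variable {c : ℕ}

/-- The derivative of `completeM` in the direction `Vt`. -/
def completeDir (Vt : Fin (c+1) → Fin c → ℝ) : Fin (c+1) → Fin (c+1) → ℝ :=
  fun i j => if h : (j : ℕ) < c then Vt i ⟨j, h⟩ else -∑ k, Vt i k

@[simp]
lemma completeDir_castSucc (Vt : Fin (c+1) → Fin c → ℝ) (i : Fin (c+1)) (j : Fin c) :
    completeDir Vt i (Fin.castSucc j) = Vt i j := by
  simp [completeDir]

@[simp]
lemma completeDir_last (Vt : Fin (c+1) → Fin c → ℝ) (i : Fin (c+1)) :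
    completeDir Vt i (Fin.last c) = -∑ k, Vt i k := by
  simp [completeDir]

lemma completeDir_curry_ne_zero {v : Fin (c+1) × Fin c → ℝ} (hv : v ≠ 0) :
    completeDir (Function.curry v) ≠ 0 := by
  contrapose! hv
  ext ⟨i, j⟩
  simpa using congrFun₂ hv i (Fin.castSucc j)

def hessIntegrand (M : Fin (c+1) → Fin (c+1) → ℝ) (a b : Fin (c+1) → ℝ)
    (p p' : Fin (c+1) × Fin c) : ℝ :=
  b p.1 * b p'.1 *
    ((if p.2 = p'.2 then a (Fin.castSucc p.2) / (mtv M b (Fin.castSucc p.2)) ^ 2 else 0) +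
      a (Fin.last c) / (mtv M b (Fin.last c)) ^ 2)

lemma hessIntegrand_comm (M : Fin (c+1) → Fin (c+1) → ℝ) (a b : Fin (c+1) → ℝ)
    (p p' : Fin (c+1) × Fin c) : hessIntegrand M a b p p' = hessIntegrand M a b p' p := by
  unfold hessIntegrand
  by_cases h : p.2 = p'.2
  · rw [if_pos h, if_pos h.symm, h, mul_comm (b p.1)]
  · rw [if_neg h, if_neg (Ne.symm h), mul_comm (b p.1)]

lemma dotProduct_mulVec_hessIntegrand (M : Fin (c+1) → Fin (c+1) → ℝ) (a b : Fin (c+1) → ℝ)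
    (v : Fin (c+1) × Fin c → ℝ) :
    v ⬝ᵥ (Matrix.of (hessIntegrand M a b) *ᵥ v)
      = ∑ k, (mtv (completeDir (Function.curry v)) b k / mtv M b k) ^ 2 * a k := by
  set f : Fin (c+1) → ℝ := fun k => a k / mtv M b k ^ 2
  set w : Fin c → ℝ := fun j => ∑ i, v (i, j) * b i
  have hw : ∀ k, mtv (completeDir (Function.curry v)) b k
      = Fin.lastCases (-∑ j, w j) w k := by
    refine Fin.lastCases ?_ fun j => ?_
    · simp only [mtv, completeDir_last, Function.curry_apply, neg_mul, sum_mul, sum_neg_distrib,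
        Fin.lastCases_last, neg_inj, w]
      exact sum_comm
    · simp [mtv, w]
  calc v ⬝ᵥ (Matrix.of (hessIntegrand M a b) *ᵥ v)
      = ∑ j, ∑ j', w j * w j' *
          ((if j = j' then f (Fin.castSucc j) else 0) + f (Fin.last c)) := by
        simp only [dotProduct, Matrix.mulVec, mul_sum, Fintype.sum_prod_type_right]
        refine sum_congr rfl fun j _ => ?_
        rw [sum_comm]
        refine sum_congr rfl fun j' _ => ?_
        simp only [w, sum_mul_sum]
        simp only [sum_mul]
        refine sum_congr rfl fun i _ => sum_congr rfl fun i' _ => ?_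
        simp only [Matrix.of_apply, hessIntegrand, f]
        ring
    _ = ∑ j, w j ^ 2 * f (Fin.castSucc j) + (∑ j, w j) ^ 2 * f (Fin.last c) := by
        simp only [mul_add, sum_add_distrib, mul_ite, mul_zero, sum_ite_eq, mem_univ, if_true,
          ← sum_mul, sum_mul_sum, sq]
    _ = ∑ k, (mtv (completeDir (Function.curry v)) b k / mtv M b k) ^ 2 * a k := by
        simp only [Fin.sum_univ_castSucc, hw, Fin.lastCases_castSucc, Fin.lastCases_last, neg_sq,
          div_pow, f]
        exact congrArg₂ _ (sum_congr rfl fun j _ => by ring) (by ring)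

end Hessian

section Integral

variable {Ω : Type*} [MeasurableSpace Ω] {μ : Measure Ω} [IsFiniteMeasure μ]

lemma integrable_apply_of_mem_simplex {C : ℕ} {a : Ω → Fin C → ℝ} (ha : Measurable a)
    (ha_simplex : ∀ ω, a ω ∈ simplex C) (k : Fin C) : Integrable (fun ω => a ω k) μ :=
  .of_bound (by fun_prop) 1 <| .of_forall fun ω => by
    rw [Real.norm_of_nonneg ((ha_simplex ω).1 k)]
    exact le_one_of_mem_simplex (ha_simplex ω) k

lemma integrable_hessIntegrand {c : ℕ} {a b : Ω → Fin (c+1) → ℝ} (ha : Measurable a)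
    (hb : Measurable b) (ha_simplex : ∀ ω, a ω ∈ simplex (c+1))
    (hb_simplex : ∀ ω, b ω ∈ simplex (c+1)) {M : Fin (c+1) → Fin (c+1) → ℝ}
    (hMpos : ∀ i j, 0 < M i j) (p p' : Fin (c+1) × Fin c) :
    Integrable (fun ω => hessIntegrand M (a ω) (b ω) p p') μ := by
  obtain ⟨m, hm, hq⟩ := exists_pos_le_mtv hMpos
  have hr : ∀ ω k, |a ω k / mtv M (b ω) k ^ 2| ≤ 1 / m ^ 2 := fun ω k => by
    have hqk := hq _ (hb_simplex ω) k
    rw [abs_div, abs_of_nonneg ((ha_simplex ω).1 k), abs_of_nonneg (sq_nonneg _)]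
    exact div_le_div₀ zero_le_one (le_one_of_mem_simplex (ha_simplex ω) k) (by positivity)
      (pow_le_pow_left₀ hm.le hqk 2)
  have hbb : ∀ ω, |b ω p.1 * b ω p'.1| ≤ 1 := fun ω => by
    rw [abs_mul, abs_of_nonneg ((hb_simplex ω).1 _), abs_of_nonneg ((hb_simplex ω).1 _)]
    exact mul_le_one₀ (le_one_of_mem_simplex (hb_simplex ω) _) ((hb_simplex ω).1 _)
      (le_one_of_mem_simplex (hb_simplex ω) _)
  refine .of_bound ?_ (1 / m ^ 2 + 1 / m ^ 2) (.of_forall fun ω => ?_)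
  · unfold hessIntegrand
    split_ifs <;> fun_prop
  · rw [Real.norm_eq_abs, hessIntegrand, abs_mul]
    refine (mul_le_mul (hbb ω) ((abs_add_le _ _).trans (add_le_add ?_ (hr ω _)))
      (abs_nonneg _) zero_le_one).trans_eq (one_mul _)
    split_ifs
    · exact hr ω _
    · simp [hm.le]

lemma integral_sum_sq_mtv_div_mul_pos {C : ℕ} {a b : Ω → Fin C → ℝ} (ha : Measurable a)
    (hb : Measurable b) (ha_simplex : ∀ ω, a ω ∈ simplex C) (hb_simplex : ∀ ω, b ω ∈ simplex C)
    {M0 : Fin C → Fin C → ℝ} (hM0pos : ∀ i j, 0 < M0 i j)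
    (hcond : ∀ j, μ[(fun ω => a ω j) | MeasurableSpace.comap b inferInstance]
      =ᵐ[μ] fun ω => mtv M0 (b ω) j)
    (hpos : ∀ i : Fin C, ∀ ε > (0 : ℝ), 0 < μ {ω | 1 - ε ≤ b ω i})
    {M D : Fin C → Fin C → ℝ} (hMpos : ∀ i j, 0 < M i j) (hD : D ≠ 0) :
    0 < ∫ ω, ∑ k, (mtv D (b ω) k / mtv M (b ω) k) ^ 2 * a ω k ∂μ := by
  obtain ⟨m, hm, hq⟩ := exists_pos_le_mtv hMpos
  obtain ⟨m0, hm0, hp⟩ := exists_pos_le_mtv hM0pos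
  set G : Fin C → (Fin C → ℝ) → ℝ := fun k x => (mtv D x k / mtv M x k) ^ 2
  have hG : ∀ k, Measurable (G k) := fun k => by fun_prop
  have hGb : ∀ k, Measurable fun ω => G k (b ω) := fun k => (hG k).comp hb
  have hq_pos : ∀ ω k, 0 < mtv M (b ω) k := fun ω k => hm.trans_le (hq _ (hb_simplex ω) k)
  have hG_le : ∀ k ω, ‖G k (b ω)‖ ≤ ((∑ i, |D i k|) / m) ^ 2 := fun k ω => by
    rw [Real.norm_of_nonneg (sq_nonneg _), ← sq_abs, abs_div, abs_of_pos (hq_pos ω k)]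
    exact pow_le_pow_left₀ (div_nonneg (abs_nonneg _) (hq_pos ω k).le)
      (div_le_div₀ (sum_nonneg fun i _ => abs_nonneg _) (abs_mtv_le (hb_simplex ω) D k) hm
        (hq _ (hb_simplex ω) k)) 2
  have ha_int := integrable_apply_of_mem_simplex (μ := μ) ha ha_simplex
  have hφ_int : ∀ k, Integrable (fun ω => G k (b ω) * mtv M0 (b ω) k) μ := fun k =>
    integrable_comp_mul_of_condExp_ae_eq hb (ha_int k) (hcond k) (hG k) (hG_le k)
  have hswap : ∫ ω, ∑ k, G k (b ω) * a ω k ∂μ = ∫ ω, ∑ k, G k (b ω) * mtv M0 (b ω) k ∂μ := by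
    rw [integral_finsetSum _ fun k _ =>
        (ha_int k).bdd_mul (hGb k).aestronglyMeasurable (.of_forall (hG_le k)),
      integral_finsetSum _ fun k _ => hφ_int k]
    exact sum_congr rfl fun k _ =>
      integral_comp_mul_eq_of_condExp_ae_eq hb (ha_int k) (hcond k) (hG k) (hG_le k)
  change 0 < ∫ ω, ∑ k, G k (b ω) * a ω k ∂μ
  have hterm_nonneg : ∀ ω k, 0 ≤ G k (b ω) * mtv M0 (b ω) k := fun ω k =>
    mul_nonneg (sq_nonneg _) (hm0.le.trans (hp _ (hb_simplex ω) k))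
  rw [hswap, integral_pos_iff_support_of_nonneg (fun ω => sum_nonneg fun k _ => hterm_nonneg ω k)
    (integrable_finsetSum _ fun k _ => hφ_int k)]
  obtain ⟨i, k, hik⟩ : ∃ i k, D i k ≠ 0 := by
    by_contra! h
    exact hD (funext₂ h)
  refine (measure_dotProduct_ne_zero_pos hb_simplex hpos (u := fun i => D i k) ?_).trans_le
    (measure_mono fun ω hω => (sum_pos' (fun k _ => hterm_nonneg ω k) ⟨k, mem_univ k, ?_⟩).ne')
  · exact Function.ne_iff.mpr ⟨i, hik⟩
  · exact mul_pos (sq_pos_of_ne_zero (div_ne_zero hω (hq_pos ω k).ne'))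
      (hm0.trans_le (hp _ (hb_simplex ω) k))

end Integral

theorem stmt3_general {Ωs : Type*} [MeasurableSpace Ωs] (μ : Measure Ωs) [IsProbabilityMeasure μ]
    (c : ℕ)
    (a b : Ωs → Fin (c+1) → ℝ) (ha_meas : Measurable a) (hb_meas : Measurable b)
    (ha_simplex : ∀ ω, a ω ∈ simplex (c+1)) (hb_simplex : ∀ ω, b ω ∈ simplex (c+1))
    (M0 : Fin (c+1) → Fin (c+1) → ℝ) (hM0pos : ∀ i j, 0 < M0 i j)
    (hcond : ∀ j, μ[(fun ω => a ω j) | MeasurableSpace.comap b inferInstance]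
      =ᵐ[μ] fun ω => mtv M0 (b ω) j)
    (hpos : ∀ i : Fin (c+1), ∀ ε > (0 : ℝ), 0 < μ {ω | 1 - ε ≤ b ω i})
    (ξ : ℝ) (hξ : 0 < ξ)
    (Mt : Fin (c+1) → Fin c → ℝ) (hMt : ∀ i j, 0 < completeM Mt i j) :
    (Matrix.of fun ij ij' : Fin (c+1) × Fin c =>
      ξ * ∫ ω, b ω ij.1 * b ω ij'.1 *
        ((if ij.2 = ij'.2 then
            a ω (Fin.castSucc ij.2) / (mtv (completeM Mt) (b ω) (Fin.castSucc ij.2)) ^ 2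
          else 0) +
          a ω (Fin.last c) / (mtv (completeM Mt) (b ω) (Fin.last c)) ^ 2) ∂μ).PosDef := by
  change (ξ • Matrix.of fun p p' => ∫ ω, hessIntegrand (completeM Mt) (a ω) (b ω) p p' ∂μ).PosDef
  refine .smul (.of_dotProduct_mulVec_pos ?_ fun v hv => ?_) hξ
  · ext p p'
    exact integral_congr_ae (.of_forall fun ω => hessIntegrand_comm _ _ _ p' p)
  · rw [star_trivial, dotProduct_mulVec_integral
      (integrable_hessIntegrand ha_meas hb_meas ha_simplex hb_simplex hMt)]
    simp only [dotProduct_mulVec_hessIntegrand]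
    exact integral_sum_sq_mtv_div_mul_pos ha_meas hb_meas ha_simplex hb_simplex hM0pos hcond hpos
      hMt (completeDir_curry_ne_zero hv)

/-- under E[a|b] = (M⁰)'b a.s. (M⁰ row-stochastic, strictly positive entries) and
Assumption 1 on b, for ξ > 0 and any C×(C−1) matrix M̃ whose completion M has strictly positive
entries, the Hessian H(M̃) of M̃ ↦ ξ·E[D_KL(a ‖ M'b)], with entries
H_{(i,j),(i',j')} = ξ·E[b_i b_{i'} (1{j=j'}·a_j/((M'b)_j)² + a_C/((M'b)_C)²)],
is symmetric positive definite. -/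
theorem stmt3 {Ωs : Type*} [MeasurableSpace Ωs] (μ : Measure Ωs) [IsProbabilityMeasure μ]
    (c : ℕ) (hc : 1 ≤ c)
    (a b : Ωs → Fin (c+1) → ℝ) (ha_meas : Measurable a) (hb_meas : Measurable b)
    (ha_simplex : ∀ ω, a ω ∈ simplex (c+1)) (hb_simplex : ∀ ω, b ω ∈ simplex (c+1))
    (M0 : Fin (c+1) → Fin (c+1) → ℝ) (hM0 : rowStochastic M0) (hM0pos : ∀ i j, 0 < M0 i j)
    (hcond : ∀ j, μ[(fun ω => a ω j) | MeasurableSpace.comap b inferInstance]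
      =ᵐ[μ] fun ω => mtv M0 (b ω) j)
    (hpos : ∀ i : Fin (c+1), ∀ ε > (0 : ℝ), 0 < μ {ω | 1 - ε ≤ b ω i})
    (ξ : ℝ) (hξ : 0 < ξ)
    (Mt : Fin (c+1) → Fin c → ℝ) (hMt : ∀ i j, 0 < completeM Mt i j) :
    (Matrix.of fun ij ij' : Fin (c+1) × Fin c =>
      ξ * ∫ ω, b ω ij.1 * b ω ij'.1 *
        ((if ij.2 = ij'.2 then
            a ω (Fin.castSucc ij.2) / (mtv (completeM Mt) (b ω) (Fin.castSucc ij.2)) ^ 2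
          else 0) +
          a ω (Fin.last c) / (mtv (completeM Mt) (b ω) (Fin.last c)) ^ 2) ∂μ).PosDef :=
  stmt3_general μ c a b ha_meas hb_meas ha_simplex hb_simplex M0 hM0pos hcond hpos ξ hξ Mt hMt

end GBQL
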